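/- With C_r the one-point code of length qm from the elementary abelian p-extension y^q + μy = f(x): if 0 ≤ r < qm then dim C_r = |H(r)| where H(r) = {u ∈ ⟨q,m⟩ : u ≤ r}; if qm ≤ r ≤ 2qm−q−m−1 then dim C_r = qm − |H(2qm−q−m−1−r)|; and if qm−q−m−1 < r < qm then dim C_r = r + 1 − (q−1)(m−1)/2. -/

import Mathlib

/-- The one-point geometric Goppa code `C_r = C_L(D, rQ∞)` on the elementary abelian
`p`-extension `y^q + μy = f(x)`, realized concretely: `L(rQ∞)` has basis
`{xⁱyʲ : 0 ≤ i, 0 ≤ j ≤ q-1, iq + jm ≤ r}`, evaluated at the `qm` rational places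
`P_{αᵢ,βⱼ}` (identified with the points `(αᵢ, βⱼ)`). -/
def onePointCode {K : Type*} [Field K] (q m : ℕ) (α : Fin m → K) (β : Fin q → K)
    (r : ℕ) : Submodule K (Fin m × Fin q → K) :=
  Submodule.span K {w : Fin m × Fin q → K |
    ∃ i j : ℕ, j ≤ q - 1 ∧ i * q + j * m ≤ r ∧ w = fun P => α P.1 ^ i * β P.2 ^ j}

/-!
On the `m × q` grid of points the functions `x^i y^j` with `i < m`, `j < q` are the columns
of the Kronecker product of two invertible Vandermonde matrices, and every other monomial
agrees on the grid with a combination of lower powers of `x`. Hence `dim C_r` is the number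
of grid exponents `(i, j)` with pole order `iq + jm ≤ r`. Since `gcd(q, m) = 1`, distinct grid
exponents have distinct pole orders, and below `qm` they are exactly the elements of `⟨q, m⟩`;
this gives the first range. The reflection `(i, j) ↦ (m-1-i, q-1-j)` turns `iq + jm` into
`2qm - q - m - (iq + jm)`, which gives the second. For the third, `u ↦ qm - q - m - u`
exchanges the gaps of `⟨q, m⟩` with its elements below the conductor `(q-1)(m-1)`, so there
are `(q-1)(m-1)/2` gaps, all below `r`.
-/

open Set Submodule Matrix
open scoped Kronecker

/-- `v_{Q∞}(x) = -q` and `v_{Q∞}(y) = -m`, so `xⁱyʲ` has a pole of order `iq + jm` at `Q∞`. -/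
def poleOrder (q m : ℕ) (k : Fin m × Fin q) : ℕ := k.1 * q + k.2 * m

section OnePointCode

variable {K : Type*} [Field K] {m q : ℕ}

def gridMonomial (α : Fin m → K) (β : Fin q → K) (k : Fin m × Fin q) : Fin m × Fin q → K :=
  fun P => α P.1 ^ (k.1 : ℕ) * β P.2 ^ (k.2 : ℕ)

theorem Matrix.isUnit_vandermonde {n : ℕ} {v : Fin n → K} (hv : Function.Injective v) :
    IsUnit (vandermonde v) :=
  (isUnit_iff_isUnit_det _).2 (det_vandermonde_ne_zero_iff.2 hv).isUnit

theorem span_range_pow_eq_top {n : ℕ} {v : Fin n → K} (hv : Function.Injective v) :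
    span K (range fun (i : Fin n) (x : Fin n) => v x ^ (i : ℕ)) = ⊤ :=
  (linearIndependent_cols_iff_isUnit.2 (isUnit_vandermonde hv)).span_eq_top_of_card_eq_finrank'
    (by simp)

theorem linearIndependent_mul_pow {α : Fin m → K} {β : Fin q → K}
    (hα : Function.Injective α) (hβ : Function.Injective β) :
    LinearIndependent K (gridMonomial α β) :=
  linearIndependent_cols_iff_isUnit.2 <|
    (isUnit_vandermonde hα).kronecker (isUnit_vandermonde hβ)

theorem mul_pow_mem_span_mul_pow {α : Fin m → K} (hα : Function.Injective α) (β : Fin q → K)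
    {r i j : ℕ} (hj : j < q) (hr : i * q + j * m ≤ r) :
    (fun P : Fin m × Fin q => α P.1 ^ i * β P.2 ^ j) ∈
      span K ((gridMonomial α β) '' {k | poleOrder q m k ≤ r}) := by
  by_cases hi : i < m
  · exact subset_span ⟨(⟨i, hi⟩, ⟨j, hj⟩), hr, rfl⟩
  let L : (Fin m → K) →ₗ[K] (Fin m × Fin q → K) :=
    LinearMap.mulRight K (fun P => β P.2 ^ j) ∘ₗ LinearMap.funLeft K K Prod.fst
  have hxi : (fun x => α x ^ i) ∈
      span K (range fun (i' : Fin m) (x : Fin m) => α x ^ (i' : ℕ)) := by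
    rw [span_range_pow_eq_top hα]
    trivial
  have hmem := mem_map_of_mem (f := L) hxi
  rw [map_span, ← range_comp] at hmem
  refine span_mono ?_ hmem
  rintro _ ⟨i', rfl⟩
  refine ⟨(i', ⟨j, hj⟩), ?_, rfl⟩
  have : (i' : ℕ) * q ≤ i * q := Nat.mul_le_mul_right _ (by omega)
  change (i' : ℕ) * q + j * m ≤ r
  omega

theorem onePointCode_eq_span (hq : 0 < q) {α : Fin m → K} (hα : Function.Injective α)
    (β : Fin q → K) (r : ℕ) :
    onePointCode q m α β r = span K ((gridMonomial α β) '' {k | poleOrder q m k ≤ r}) := by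
  apply le_antisymm
  · rw [onePointCode, span_le]
    rintro _ ⟨i, j, hj, hr, rfl⟩
    exact mul_pow_mem_span_mul_pow hα β (by omega) hr
  · rw [onePointCode, span_le]
    rintro _ ⟨k, hk, rfl⟩
    exact subset_span ⟨k.1, k.2, by omega, hk, rfl⟩

theorem finrank_onePointCode (hq : 0 < q) {α : Fin m → K} (hα : Function.Injective α)
    {β : Fin q → K} (hβ : Function.Injective β) (r : ℕ) :
    Module.finrank K (onePointCode q m α β r) = {k | poleOrder q m k ≤ r}.ncard := by
  rw [onePointCode_eq_span hq hα β r, image_eq_range, ← Nat.card_coe_set_eq,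
    Nat.card_eq_fintype_card]
  exact finrank_span_eq_card ((linearIndependent_mul_pow hα hβ).comp _ Subtype.val_injective)

end OnePointCode

section Semigroup

variable {q m : ℕ}

theorem eq_and_eq_of_mul_add_mul_eq (hco : q.Coprime m) {i i' j j' : ℕ} (hj : j < q)
    (hj' : j' < q) (h : i * q + j * m = i' * q + j' * m) : i = i' ∧ j = j' := by
  have hmod : j * m ≡ j' * m [MOD q] := by
    simpa [Nat.ModEq, Nat.add_mul_mod_self_left, add_comm] using congrArg (· % q) h
  obtain rfl : j = j' := Nat.ModEq.eq_of_lt_of_lt (hmod.cancel_right_of_coprime hco) hj hj'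
  exact ⟨Nat.eq_of_mul_eq_mul_right (by omega) (by omega : i * q = i' * q), rfl⟩

theorem add_ne_frobenius_of_mem_of_mem (hq : 0 < q) (hco : q.Coprime m) {u v : ℕ}
    (hu : ∃ i j : ℕ, u = i * q + j * m) (hv : ∃ i j : ℕ, v = i * q + j * m) :
    u + v + q + m ≠ q * m := by
  obtain ⟨i, j, rfl⟩ := hu
  obtain ⟨i', j', rfl⟩ := hv
  intro h
  have hsum : (i + i' + 1) * q + (j + j' + 1) * m = q * m := by rw [← h]; ring
  have hdvd : q ∣ j + j' + 1 := by
    refine hco.dvd_of_dvd_mul_right ((Nat.dvd_add_right (dvd_mul_left q (i + i' + 1))).mp ?_)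
    exact hsum ▸ dvd_mul_right q m
  have h1 : q * m ≤ (j + j' + 1) * m := Nat.mul_le_mul_right _ (Nat.le_of_dvd (by omega) hdvd)
  have h2 : q ≤ (i + i' + 1) * q := Nat.le_mul_of_pos_left q (by omega)
  omega

theorem exists_mem_add_eq_frobenius_of_not_mem (hq : 0 < q) (hco : q.Coprime m) {u : ℕ}
    (hu : ¬ ∃ i j : ℕ, u = i * q + j * m) :
    ∃ v, (∃ i j : ℕ, v = i * q + j * m) ∧ u + v + q + m = q * m := by
  -- choose `j < q` with `jm ≡ u (mod q)`; as `u` is a gap, `jm` exceeds `u` by some `kq`, `k ≥ 1`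
  obtain ⟨j, hjq, hj⟩ := Nat.exists_mul_mod_eq_of_coprime u hco.symm hq.ne'
  have hmod : u ≡ m * j [MOD q] := hj.symm
  rcases le_or_gt (m * j) u with hle | hlt
  · obtain ⟨k, hk⟩ := (Nat.modEq_iff_dvd' hle).mp hmod.symm
    exact absurd ⟨k, j, by rw [mul_comm k, mul_comm j]; omega⟩ hu
  obtain ⟨k, hk⟩ := (Nat.modEq_iff_dvd' hlt.le).mp hmod
  obtain ⟨k, rfl⟩ : ∃ k', k = k' + 1 := ⟨k - 1, by rcases k with _ | k <;> omega⟩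
  obtain ⟨d, rfl⟩ : ∃ d, q = j + 1 + d := ⟨q - j - 1, by omega⟩
  refine ⟨k * (j + 1 + d) + d * m, ⟨k, d, rfl⟩, ?_⟩
  have : m * j = u + (j + 1 + d) * (k + 1) := by omega
  nlinarith

theorem ncard_gaps (hq : 0 < q) (hm : 0 < m) (hco : q.Coprime m) :
    {u | ¬ ∃ i j : ℕ, u = i * q + j * m}.ncard = (q - 1) * (m - 1) / 2 := by
  set n := (q - 1) * (m - 1)
  have hn : n + q + m = q * m + 1 := by
    obtain ⟨a, rfl⟩ : ∃ a, q = a + 1 := ⟨q - 1, by omega⟩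
    obtain ⟨b, rfl⟩ : ∃ b, m = b + 1 := ⟨m - 1, by omega⟩
    simp only [n, Nat.add_sub_cancel]
    ring
  set G := {u | ¬ ∃ i j : ℕ, u = i * q + j * m}
  set N := {u | (∃ i j : ℕ, u = i * q + j * m) ∧ u < n}
  have hG : G ⊆ Iio n := fun u hu => by
    obtain ⟨v, -, huv⟩ := exists_mem_add_eq_frobenius_of_not_mem hq hco hu
    simp only [mem_Iio]
    omega
  have hGN : (fun u => n - 1 - u) '' G = N := by
    ext v
    constructor
    · rintro ⟨u, hu, rfl⟩
      dsimp only
      obtain ⟨w, hw, huw⟩ := exists_mem_add_eq_frobenius_of_not_mem hq hco hu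
      obtain rfl : w = n - 1 - u := by omega
      exact ⟨hw, by omega⟩
    · rintro ⟨hv, hvn⟩
      exact ⟨n - 1 - v, fun hu => add_ne_frobenius_of_mem_of_mem hq hco hu hv (by omega),
        show n - 1 - (n - 1 - v) = v by omega⟩
  have hinj : InjOn (fun u => n - 1 - u) G := fun u hu u' hu' h => by
    have := hG hu
    have := hG hu'
    simp only [mem_Iio] at *
    omega
  have hunion : G ∪ N = Iio n := by
    refine Subset.antisymm (union_subset hG fun u hu => hu.2) fun u hu => ?_
    by_cases h : ∃ i j : ℕ, u = i * q + j * m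
    · exact Or.inr ⟨h, hu⟩
    · exact Or.inl h
  have hcard := ncard_union_eq (s := G) (t := N) (disjoint_left.2 fun u hu hu' => hu hu'.1)
    ((finite_Iio n).subset hG) ((finite_Iio n).subset fun u hu => hu.2)
  rw [hunion, ncard_Iio_nat, ← hGN, hinj.ncard_image] at hcard
  omega

theorem ncard_mem_le_add_ncard_gaps (hq : 0 < q) (hco : q.Coprime m) {r : ℕ}
    (hr : q * m ≤ r + q + m) :
    {u | (∃ i j : ℕ, u = i * q + j * m) ∧ u ≤ r}.ncard +
      {u | ¬ ∃ i j : ℕ, u = i * q + j * m}.ncard = r + 1 := by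
  set H := {u | (∃ i j : ℕ, u = i * q + j * m) ∧ u ≤ r}
  set G := {u | ¬ ∃ i j : ℕ, u = i * q + j * m}
  have hG : G ⊆ Iic r := fun u hu => by
    obtain ⟨v, -, huv⟩ := exists_mem_add_eq_frobenius_of_not_mem hq hco hu
    simp only [mem_Iic]
    omega
  have hunion : H ∪ G = Iic r := by
    refine Subset.antisymm (union_subset (fun u hu => hu.2) hG) fun u hu => ?_
    by_cases h : ∃ i j : ℕ, u = i * q + j * m
    · exact Or.inl ⟨h, hu⟩
    · exact Or.inr h
  rw [← ncard_union_eq (s := H) (t := G) (disjoint_left.2 fun u hu hu' => hu' hu.1)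
    ((finite_Iic r).subset fun u hu => hu.2) ((finite_Iic r).subset hG), hunion, ncard_Iic_nat]

theorem poleOrder_injective (hco : q.Coprime m) :
    Function.Injective (poleOrder q m) := fun k k' h => by
  obtain ⟨h1, h2⟩ := eq_and_eq_of_mul_add_mul_eq hco k.2.isLt k'.2.isLt h
  exact Prod.ext (Fin.ext h1) (Fin.ext h2)

theorem image_poleOrder_setOf_le {c : ℕ} (hc : c < q * m) :
    (poleOrder q m) '' {k | poleOrder q m k ≤ c} =
      {u | (∃ i j : ℕ, u = i * q + j * m) ∧ u ≤ c} := by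
  ext u
  constructor
  · rintro ⟨k, hk, rfl⟩
    exact ⟨⟨k.1, k.2, rfl⟩, hk⟩
  rintro ⟨⟨i, j, rfl⟩, hu⟩
  have hq : 0 < q := Nat.pos_of_mul_pos_right (hc.trans_le' (Nat.zero_le c))
  have hrep : i * q + j * m = (i + m * (j / q)) * q + j % q * m := by
    conv_lhs => rw [← Nat.div_add_mod j q]
    ring
  have hi : i + m * (j / q) < m := by
    by_contra! h
    have := Nat.mul_le_mul_right q h
    rw [mul_comm m q] at this
    omega
  exact ⟨(⟨_, hi⟩, ⟨_, Nat.mod_lt j hq⟩), by simpa [poleOrder, ← hrep] using hu, hrep.symm⟩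

theorem ncard_mem_le_eq_ncard_poleOrder_le (hco : q.Coprime m) {c : ℕ} (hc : c < q * m) :
    {u | (∃ i j : ℕ, u = i * q + j * m) ∧ u ≤ c}.ncard = {k | poleOrder q m k ≤ c}.ncard := by
  rw [← image_poleOrder_setOf_le hc, ncard_image_of_injective _ (poleOrder_injective hco)]

theorem poleOrder_rev_add_poleOrder (k : Fin m × Fin q) :
    poleOrder q m (k.1.rev, k.2.rev) + poleOrder q m k + q + m = 2 * q * m := by
  have h1 : (k.1.rev : ℕ) + k.1 + 1 = m := by rw [Fin.val_rev]; omega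
  have h2 : (k.2.rev : ℕ) + k.2 + 1 = q := by rw [Fin.val_rev]; omega
  calc _ = ((k.1.rev : ℕ) + k.1 + 1) * q + ((k.2.rev : ℕ) + k.2 + 1) * m := by
        simp only [poleOrder]; ring
    _ = 2 * q * m := by rw [h1, h2]; ring

theorem ncard_poleOrder_le_add_ncard_poleOrder_le {r s : ℕ}
    (h : r + s + 1 + q + m = 2 * q * m) :
    {k | poleOrder q m k ≤ r}.ncard + {k | poleOrder q m k ≤ s}.ncard = q * m := by
  let e := (Fin.revPerm (n := m)).prodCongr (Fin.revPerm (n := q))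
  have hs : {k | poleOrder q m k ≤ s} = e ⁻¹' {k | poleOrder q m k ≤ r}ᶜ := by
    ext k
    have := poleOrder_rev_add_poleOrder k
    simp only [mem_ofPred_eq, mem_preimage, mem_compl_iff, not_le]
    change _ ↔ r < poleOrder q m (k.1.rev, k.2.rev)
    omega
  rw [hs, ncard_preimage_of_injective_subset_range e.injective (by simp [e.range_eq_univ]),
    ncard_add_ncard_compl, Nat.card_eq_fintype_card, Fintype.card_prod, Fintype.card_fin,
    Fintype.card_fin, mul_comm]

end Semigroup

theorem onePointCode_finrank_general {K : Type*} [Field K]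
    (p t : ℕ) (hp : p.Prime) (q : ℕ) (hq : q = p ^ t)
    (m : ℕ) (hmp : ¬ p ∣ m)
    (α : Fin m → K) (hα : Function.Injective α)
    (β : Fin q → K) (hβ : Function.Injective β)
    (r : ℕ) :
    (r < q * m →
        Module.finrank K (onePointCode q m α β r) =
          Set.ncard {u : ℕ | (∃ i j : ℕ, u = i * q + j * m) ∧ u ≤ r}) ∧
      (q * m ≤ r → r ≤ 2 * q * m - q - m - 1 →
        Module.finrank K (onePointCode q m α β r) =
          q * m - Set.ncard {u : ℕ | (∃ i j : ℕ, u = i * q + j * m) ∧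
            u ≤ 2 * q * m - q - m - 1 - r}) ∧
      (q * m - q - m - 1 < r → r < q * m →
        Module.finrank K (onePointCode q m α β r) = r + 1 - (q - 1) * (m - 1) / 2) := by
  have hq₀ : 0 < q := hq ▸ pow_pos hp.pos t
  have hm₀ : 0 < m := Nat.pos_of_ne_zero fun h => hmp (h ▸ dvd_zero p)
  have hco : q.Coprime m := hq ▸ (hp.coprime_iff_not_dvd.2 hmp).pow_left t
  have hqm₀ : 0 < q * m := Nat.mul_pos hq₀ hm₀
  have hqm : 2 * q * m = 2 * (q * m) := by ring
  rw [finrank_onePointCode hq₀ hα hβ]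
  refine ⟨fun hr => (ncard_mem_le_eq_ncard_poleOrder_le hco hr).symm,
    fun hr₁ hr₂ => ?_, fun hr₁ hr₂ => ?_⟩
  · have hsum := ncard_poleOrder_le_add_ncard_poleOrder_le (q := q) (m := m) (r := r)
      (s := 2 * q * m - q - m - 1 - r) (by omega)
    rw [ncard_mem_le_eq_ncard_poleOrder_le hco (by omega)]
    omega
  · have hsum := ncard_mem_le_add_ncard_gaps hq₀ hco (r := r) (by omega)
    rw [ncard_gaps hq₀ hm₀ hco] at hsum
    rw [← ncard_mem_le_eq_ncard_poleOrder_le hco hr₂]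
    omega

/-- Dimension of the one-point code `C_r` of length `qm` on `y^q + μy = f(x)`:
if `0 ≤ r < qm` then `dim C_r = |H(r)|` where `H(b) = {u ∈ ⟨q,m⟩ : u ≤ b}`;
if `qm ≤ r ≤ 2qm - q - m - 1` then `dim C_r = qm - |H(2qm - q - m - 1 - r)|`;
and if `qm - q - m - 1 < r < qm` then `dim C_r = r + 1 - (q-1)(m-1)/2`. -/
theorem onePointCode_finrank {K : Type*} [Field K] [Fintype K]
    (p t : ℕ) (hp : p.Prime) [CharP K p] (q : ℕ) (hq : q = p ^ t) (ht : 1 ≤ t)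
    (m : ℕ) (hm : 2 ≤ m) (hmp : ¬ p ∣ m)
    (μ : K) (hμ : μ ≠ 0)
    (α : Fin m → K) (hα : Function.Injective α)
    (β : Fin q → K) (hβ : Function.Injective β) (hroot : ∀ j, β j ^ q + μ * β j = 0)
    (r : ℕ) :
    (r < q * m →
        Module.finrank K (onePointCode q m α β r) =
          Set.ncard {u : ℕ | (∃ i j : ℕ, u = i * q + j * m) ∧ u ≤ r}) ∧
      (q * m ≤ r → r ≤ 2 * q * m - q - m - 1 →
        Module.finrank K (onePointCode q m α β r) =
          q * m - Set.ncard {u : ℕ | (∃ i j : ℕ, u = i * q + j * m) ∧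
            u ≤ 2 * q * m - q - m - 1 - r}) ∧
      (q * m - q - m - 1 < r → r < q * m →
        Module.finrank K (onePointCode q m α β r) = r + 1 - (q - 1) * (m - 1) / 2) :=
  onePointCode_finrank_general p t hp q hq m hmp α hα β hβ r
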